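/- (Optimality of t-rank-k tensor representation over rank-k matrix representation.) Let M₃,…,M_p be invertible with each M_k = c_k W_k, c_k ≠ 0 and W_k orthogonal, let A ∈ ℝ^{n₁×n₂×⋯×n_p} have t-SVDM A = U ⋆M S ⋆M Vᵀ with t-rank-k truncation A_k, and let A_mat ∈ ℝ^{(n₁n₃⋯n_p)×n₂} be the matrix whose j-th column is the vectorization of the j-th lateral slice A(:,j,:,…,:) of A. If A_k,mat denotes a best rank-k approximation of A_mat in the Frobenius norm (e.g., the rank-k truncated matrix SVD of A_mat), then ‖A − A_k‖_F ≤ ‖A_mat − A_k,mat‖_F. -/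

import Mathlib

open Matrix

/-!
Order-`p` real tensors (`p = q + 2`) are represented as families of frontal
slices: a tensor `A ∈ ℝ^{n₁ × n₂ × n₃ × ⋯ × n_p}` is a function
`A : TI m → Matrix (Fin n₁) (Fin n₂) ℝ`, where `TI m = ∀ k : Fin q, Fin (m k)`
is the trailing multi-index `(i₃, …, i_p)` and `A i` is the frontal slice
`A(:,:,i₃,…,i_p)`.
-/

namespace TSVDM

variable {q : ℕ} {m : Fin q → ℕ}

/-- Trailing multi-index `(i₃, …, i_p)`. -/
abbrev TI (m : Fin q → ℕ) : Type := ∀ k, Fin (m k)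

/-- Transform-domain tensor `Â = A ×₃ M₃ ×₄ M₄ ⋯ ×_p M_p`
(mode-`k` products along all trailing modes). -/
noncomputable def hat (M : ∀ k, Matrix (Fin (m k)) (Fin (m k)) ℝ) {a b : Type}
    (A : TI m → Matrix a b ℝ) : TI m → Matrix a b ℝ :=
  fun i => ∑ j : TI m, (∏ k, M k (i k) (j k)) • A j

/-- Inverse transform `×₃ M₃⁻¹ ×₄ M₄⁻¹ ⋯ ×_p M_p⁻¹`. -/
noncomputable def unhat (M : ∀ k, Matrix (Fin (m k)) (Fin (m k)) ℝ) {a b : Type}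
    (A : TI m → Matrix a b ℝ) : TI m → Matrix a b ℝ :=
  fun i => ∑ j : TI m, (∏ k, (M k)⁻¹ (i k) (j k)) • A j

/-- The `⋆M`-product: `A ⋆M B = (Â △ B̂) ×₃ M₃⁻¹ ⋯ ×_p M_p⁻¹`, where `△` is the
facewise product (slice-wise matrix multiplication). -/
noncomputable def starM (M : ∀ k, Matrix (Fin (m k)) (Fin (m k)) ℝ)
    {a b c : Type} [Fintype b]
    (A : TI m → Matrix a b ℝ) (B : TI m → Matrix b c ℝ) : TI m → Matrix a c ℝ :=
  unhat M (fun i => hat M A i * hat M B i)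

/-- The `⋆M`-transpose: transpose every transform-domain frontal slice. -/
noncomputable def transM (M : ∀ k, Matrix (Fin (m k)) (Fin (m k)) ℝ) {a b : Type}
    (A : TI m → Matrix a b ℝ) : TI m → Matrix b a ℝ :=
  unhat M (fun i => (hat M A i)ᵀ)

/-- The `⋆M`-identity: all transform-domain frontal slices equal the identity matrix. -/
noncomputable def idM (M : ∀ k, Matrix (Fin (m k)) (Fin (m k)) ℝ)
    (a : Type) [DecidableEq a] : TI m → Matrix a a ℝ :=
  unhat M (fun _ => (1 : Matrix a a ℝ))

/-- `Q` is `⋆M`-orthogonal if `Qᵀ ⋆M Q = Q ⋆M Qᵀ = I`. -/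
def IsStarMOrthogonal (M : ∀ k, Matrix (Fin (m k)) (Fin (m k)) ℝ)
    {a : Type} [Fintype a] [DecidableEq a] (Q : TI m → Matrix a a ℝ) : Prop :=
  starM M (transM M Q) Q = idM M a ∧ starM M Q (transM M Q) = idM M a

/-- Frobenius norm of a tensor. -/
noncomputable def frob {a b : Type} [Fintype a] [Fintype b]
    (A : TI m → Matrix a b ℝ) : ℝ :=
  Real.sqrt (∑ i : TI m, ∑ r : a, ∑ c : b, A i r c ^ 2)

/-- Diagonal position `(j, j)`: row index. -/
def dIdx₁ {n₁ n₂ : ℕ} (j : Fin (min n₁ n₂)) : Fin n₁ :=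
  ⟨j.1, lt_of_lt_of_le j.2 (Nat.min_le_left n₁ n₂)⟩

/-- Diagonal position `(j, j)`: column index. -/
def dIdx₂ {n₁ n₂ : ℕ} (j : Fin (min n₁ n₂)) : Fin n₂ :=
  ⟨j.1, lt_of_lt_of_le j.2 (Nat.min_le_right n₁ n₂)⟩

/-- `A = U ⋆M S ⋆M Vᵀ` is a t-SVDM of `A`: `U`, `V` are `⋆M`-orthogonal, `S` is
f-diagonal (each transform-domain frontal slice is diagonal), and the diagonal
entries of each frontal slice of `Ŝ` are nonnegative and in descending order. -/
structure IsTSVDM (M : ∀ k, Matrix (Fin (m k)) (Fin (m k)) ℝ) {n₁ n₂ : ℕ}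
    (A : TI m → Matrix (Fin n₁) (Fin n₂) ℝ)
    (U : TI m → Matrix (Fin n₁) (Fin n₁) ℝ)
    (S : TI m → Matrix (Fin n₁) (Fin n₂) ℝ)
    (V : TI m → Matrix (Fin n₂) (Fin n₂) ℝ) : Prop where
  decomp : A = starM M (starM M U S) (transM M V)
  orthU : IsStarMOrthogonal M U
  orthV : IsStarMOrthogonal M V
  fdiag : ∀ (i : TI m) (a : Fin n₁) (b : Fin n₂), (a : ℕ) ≠ (b : ℕ) → hat M S i a b = 0
  nonneg : ∀ (i : TI m) (j : Fin (min n₁ n₂)), 0 ≤ hat M S i (dIdx₁ j) (dIdx₂ j)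
  descend : ∀ (i : TI m) (j j' : Fin (min n₁ n₂)), j ≤ j' →
    hat M S i (dIdx₁ j') (dIdx₂ j') ≤ hat M S i (dIdx₁ j) (dIdx₂ j)

/-- The `(j,j)`-singular tube of `S`, as a function of the trailing multi-index. -/
def tube {n₁ n₂ : ℕ} (S : TI m → Matrix (Fin n₁) (Fin n₂) ℝ)
    (j : Fin (min n₁ n₂)) : TI m → ℝ :=
  fun i => S i (dIdx₁ j) (dIdx₂ j)

/-- Frobenius norm of the `(j,j)`-singular tube of `S`. -/
noncomputable def tubeNorm {n₁ n₂ : ℕ} (S : TI m → Matrix (Fin n₁) (Fin n₂) ℝ)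
    (j : Fin (min n₁ n₂)) : ℝ :=
  Real.sqrt (∑ i : TI m, tube S j i ^ 2)

/-- `r` is the t-rank: the number of nonzero singular tubes (tubes `s₁,…,s_r`
are nonzero and the remaining ones vanish). -/
def HasTRank {n₁ n₂ : ℕ} (S : TI m → Matrix (Fin n₁) (Fin n₂) ℝ) (r : ℕ) : Prop :=
  ∀ j : Fin (min n₁ n₂), ((j : ℕ) < r ↔ tube S j ≠ 0)

/-- Keep only the first `k` lateral slices (columns of each frontal slice). -/
def truncCols {n k : ℕ} (hk : k ≤ n) {a : Type}
    (U : TI m → Matrix a (Fin n) ℝ) : TI m → Matrix a (Fin k) ℝ :=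
  fun i => Matrix.of fun r c => U i r (Fin.castLE hk c)

/-- Keep only the leading `k × k` block of each frontal slice. -/
def truncBlock {n₁ n₂ k : ℕ} (h₁ : k ≤ n₁) (h₂ : k ≤ n₂)
    (S : TI m → Matrix (Fin n₁) (Fin n₂) ℝ) : TI m → Matrix (Fin k) (Fin k) ℝ :=
  fun i => Matrix.of fun a b => S i (Fin.castLE h₁ a) (Fin.castLE h₂ b)

/-- The t-rank-`k` truncation `A_k = U_k ⋆M S_k ⋆M V_kᵀ`. -/
noncomputable def truncApprox (M : ∀ k, Matrix (Fin (m k)) (Fin (m k)) ℝ)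
    {n₁ n₂ : ℕ} (U : TI m → Matrix (Fin n₁) (Fin n₁) ℝ)
    (S : TI m → Matrix (Fin n₁) (Fin n₂) ℝ)
    (V : TI m → Matrix (Fin n₂) (Fin n₂) ℝ) (k : ℕ) (hk : k ≤ min n₁ n₂) :
    TI m → Matrix (Fin n₁) (Fin n₂) ℝ :=
  starM M
    (starM M (truncCols (le_trans hk (Nat.min_le_left _ _)) U)
      (truncBlock (le_trans hk (Nat.min_le_left _ _)) (le_trans hk (Nat.min_le_right _ _)) S))
    (transM M (truncCols (le_trans hk (Nat.min_le_right _ _)) V))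

/-- The `j`-th lateral slice `A(:,j,:,…,:)`, as an `n₁ × 1 × n₃ × ⋯ × n_p` tensor. -/
def lateral {n₁ n₂ : ℕ} (A : TI m → Matrix (Fin n₁) (Fin n₂) ℝ) (j : Fin n₂) :
    TI m → Matrix (Fin n₁) (Fin 1) ℝ :=
  fun i => Matrix.of fun r _ => A i r j

/-- The `(j,j)`-singular tube of `S` regarded as a `1 × 1 × n₃ × ⋯ × n_p` tensor. -/
def tubeT {n₁ n₂ : ℕ} (S : TI m → Matrix (Fin n₁) (Fin n₂) ℝ)
    (j : Fin (min n₁ n₂)) : TI m → Matrix (Fin 1) (Fin 1) ℝ :=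
  fun i => Matrix.of fun _ _ => S i (dIdx₁ j) (dIdx₂ j)


/-- Frobenius norm of a matrix. -/
noncomputable def mFrob {a b : Type} [Fintype a] [Fintype b] (X : Matrix a b ℝ) : ℝ :=
  Real.sqrt (∑ i : a, ∑ j : b, X i j ^ 2)

/-!
Since each `M k` is a nonzero multiple of an orthogonal matrix, the transform `A ↦ Â`
multiplies squared Frobenius norms by `∏ (c k)²`, so it suffices to compare `Â - Â_k`
with `Â - B̂`, where `B̂` is the transform of the tensor folded from `B`. Slice by slice,
`Â_k` is the truncated SVD of `Â`, while each row of `B̂ i` is a combination of rows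
of `B`, so `B̂ i` has rank at most `k`: the matrix Eckart–Young inequality finishes.

For Eckart–Young, project onto the row space of the competitor `Y` (orthonormal rows `Q`):
`‖X - Y‖² ≥ ‖X‖² - ‖X Qᵀ‖² = ∑ σⱼ² (1 - tⱼ)` with `0 ≤ tⱼ ≤ 1` and `∑ tⱼ ≤ k` by Bessel's
inequality, and such a weighted sum is smallest when the weight sits on the `k` largest `σⱼ`.
-/

section Frobenius

variable {ι κ ν : Type*} [Fintype ι] [Fintype κ] [Fintype ν]

noncomputable def frobSq (X : Matrix ι κ ℝ) : ℝ := ∑ i, ∑ j, X i j ^ 2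

lemma frobSq_nonneg (X : Matrix ι κ ℝ) : 0 ≤ frobSq X := by
  unfold frobSq; positivity

lemma frobSq_eq_trace (X : Matrix ι κ ℝ) : frobSq X = trace (Xᵀ * X) := by
  simp only [frobSq, trace, diag, mul_apply, transpose_apply, sq]
  exact Finset.sum_comm

lemma frobSq_transpose (X : Matrix ι κ ℝ) : frobSq Xᵀ = frobSq X :=
  Finset.sum_comm

lemma frobSq_diagonal [DecidableEq ι] (d : ι → ℝ) : frobSq (diagonal d) = ∑ i, d i ^ 2 := by
  simp [frobSq, diagonal_apply, ite_pow]

lemma frobSq_mul_left [DecidableEq ι] {U : Matrix ν ι ℝ} (hU : Uᵀ * U = 1) (X : Matrix ι κ ℝ) :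
    frobSq (U * X) = frobSq X := by
  rw [frobSq_eq_trace, frobSq_eq_trace, transpose_mul, Matrix.mul_assoc, ← Matrix.mul_assoc Uᵀ,
    hU, Matrix.one_mul]

lemma frobSq_mul_transpose [DecidableEq κ] {V : Matrix ν κ ℝ} (hV : Vᵀ * V = 1)
    (X : Matrix ι κ ℝ) : frobSq (X * Vᵀ) = frobSq X := by
  rw [← frobSq_transpose, transpose_mul, transpose_transpose, frobSq_mul_left hV,
    frobSq_transpose]

lemma frobSq_eq_add_of_mul_transpose_eq_one [DecidableEq κ] [DecidableEq ν] {Q : Matrix ν κ ℝ}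
    (hQ : Q * Qᵀ = 1) (Z : Matrix ι κ ℝ) :
    frobSq Z = frobSq (Z * Qᵀ) + frobSq (Z - Z * Qᵀ * Q) := by
  set G : Matrix κ κ ℝ := 1 - Qᵀ * Q
  have hGt : Gᵀ = G := by simp [G]
  have hGG : G * G = G := by
    have : Qᵀ * Q * (Qᵀ * Q) = Qᵀ * Q := by
      rw [Matrix.mul_assoc, ← Matrix.mul_assoc Q, hQ, Matrix.one_mul]
    simp only [G, sub_mul, mul_sub, Matrix.one_mul, Matrix.mul_one, this, sub_self, sub_zero]
  have hZG : Z - Z * Qᵀ * Q = Z * G := by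
    rw [Matrix.mul_sub, Matrix.mul_one, Matrix.mul_assoc]
  have h₁ : trace (Q * Zᵀ * (Z * Qᵀ)) = trace (Zᵀ * Z * (Qᵀ * Q)) := by
    rw [show Q * Zᵀ * (Z * Qᵀ) = Q * (Zᵀ * Z * Qᵀ) by simp only [Matrix.mul_assoc],
      trace_mul_comm Q, Matrix.mul_assoc]
  have h₂ : trace (G * Zᵀ * (Z * G)) = trace (Zᵀ * Z * G) := by
    rw [show G * Zᵀ * (Z * G) = G * (Zᵀ * Z * G) by simp only [Matrix.mul_assoc],
      trace_mul_comm G, Matrix.mul_assoc, hGG]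
  rw [hZG, frobSq_eq_trace, frobSq_eq_trace, frobSq_eq_trace, transpose_mul, transpose_mul, hGt,
    transpose_transpose, h₁, h₂, ← trace_add, ← mul_add]
  simp [G]

end Frobenius

section Orthonormal

variable {ι κ : Type*} [Fintype κ]

lemma orthonormal_toLp_row_iff [DecidableEq ι] (Q : Matrix ι κ ℝ) :
    Orthonormal ℝ (fun i => WithLp.toLp 2 (Q i)) ↔ Q * Qᵀ = 1 := by
  rw [orthonormal_iff_ite, ← Matrix.ext_iff]
  simp [PiLp.inner_apply, mul_apply, one_apply, mul_comm]

lemma sum_sq_mulVec_le [Fintype ι] [DecidableEq ι] {Q : Matrix ι κ ℝ} (hQ : Q * Qᵀ = 1)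
    (x : κ → ℝ) :
    ∑ i, (Q *ᵥ x) i ^ 2 ≤ ∑ j, x j ^ 2 := by
  have := ((orthonormal_toLp_row_iff Q).2 hQ).sum_inner_products_le (WithLp.toLp 2 x)
    (s := Finset.univ)
  simpa [EuclideanSpace.real_norm_sq_eq, PiLp.inner_apply, mulVec, dotProduct, mul_comm] using this

lemma sum_sq_mulVec_of_transpose_mul [Fintype ι] [DecidableEq ι] {K : Matrix ι ι ℝ} {w : ℝ}
    (hK : Kᵀ * K = w • 1) (v : ι → ℝ) : ∑ i, (K *ᵥ v) i ^ 2 = w * ∑ i, v i ^ 2 := by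
  have h : (K *ᵥ v) ⬝ᵥ (K *ᵥ v) = w * (v ⬝ᵥ v) := by
    rw [dotProduct_mulVec, ← mulVec_transpose, mulVec_mulVec, dotProduct_comm, hK, smul_mulVec,
      one_mulVec, dotProduct_smul, smul_eq_mul]
  simpa [dotProduct, sq] using h

lemma exists_mul_transpose_eq_one_and_mul_eq [Fintype ι] (Y : Matrix ι κ ℝ) :
    ∃ (r : ℕ) (Q : Matrix (Fin r) κ ℝ), r = Y.rank ∧ Q * Qᵀ = 1 ∧ Y * Qᵀ * Q = Y := by
  set K : Submodule ℝ (EuclideanSpace ℝ κ) :=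
    Submodule.span ℝ (Set.range fun i => WithLp.toLp 2 (Y i))
  let o := stdOrthonormalBasis ℝ K
  refine ⟨Module.finrank ℝ K, Matrix.of fun l => (o l : EuclideanSpace ℝ κ).ofLp, ?_, ?_, ?_⟩
  · rw [rank_eq_finrank_span_row,
      ← LinearEquiv.finrank_map_eq (WithLp.linearEquiv 2 ℝ (κ → ℝ)).symm, Submodule.map_span,
      ← Set.range_comp]
    rfl
  · rw [← orthonormal_toLp_row_iff]
    exact o.orthonormal.comp_linearIsometry K.subtypeₗᵢ
  · ext i c
    have hy : WithLp.toLp 2 (Y i) ∈ K := Submodule.subset_span ⟨i, rfl⟩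
    have := congrArg (fun z : K => (z : EuclideanSpace ℝ κ) c) (o.sum_repr' ⟨_, hy⟩)
    simpa [mul_apply, PiLp.inner_apply, Finset.sum_mul, mul_comm] using this

end Orthonormal

lemma sum_tail_le_sum_mul_one_sub {p k : ℕ} {w t : Fin p → ℝ} (hw : Antitone w)
    (hw0 : ∀ j, 0 ≤ w j) (ht0 : ∀ j, 0 ≤ t j) (ht1 : ∀ j, t j ≤ 1) (ht : ∑ j, t j ≤ k) :
    ∑ j : Fin p, (if k ≤ (j : ℕ) then w j else 0) ≤ ∑ j, w j * (1 - t j) := by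
  rcases lt_or_ge k p with hk | hk
  · -- compare each term with the threshold weight `s = w k`
    set s := w ⟨k, hk⟩
    have hterm : ∀ j : Fin p, (if k ≤ (j : ℕ) then w j else 0)
        + s * ((if (j : ℕ) < k then 1 else 0) - t j) ≤ w j * (1 - t j) := by
      intro j
      split_ifs with h₁ h₂ h₂
      · omega
      · have := hw (show (⟨k, hk⟩ : Fin p) ≤ j from h₁)
        nlinarith [ht0 j]
      · have := hw (show j ≤ ⟨k, hk⟩ from Fin.le_iff_val_le_val.2 h₂.le)
        nlinarith [ht1 j]
      · omega
    have hcount : ∑ j : Fin p, (if (j : ℕ) < k then (1 : ℝ) else 0) = k := by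
      simp [Finset.sum_boole, Fin.card_filter_val_lt, hk.le]
    calc ∑ j : Fin p, (if k ≤ (j : ℕ) then w j else 0)
        ≤ ∑ j : Fin p, ((if k ≤ (j : ℕ) then w j else 0)
            + s * ((if (j : ℕ) < k then 1 else 0) - t j)) := by
          rw [Finset.sum_add_distrib, ← Finset.mul_sum, Finset.sum_sub_distrib, hcount]
          nlinarith [hw0 ⟨k, hk⟩]
      _ ≤ _ := Finset.sum_le_sum fun j _ => hterm j
  · have : ∀ j : Fin p, ¬ k ≤ (j : ℕ) := fun j h => by omega
    simp only [this, if_false, Finset.sum_const_zero]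
    exact Finset.sum_nonneg fun j _ => mul_nonneg (hw0 j) (by linarith [ht1 j])

section EckartYoung

variable {ι κ : Type*} [Fintype ι] [Fintype κ]

lemma sum_sq_mul_apply_le {r p : ℕ} {Q : Matrix (Fin r) κ ℝ} {V : Matrix κ (Fin p) ℝ}
    (hQ : Q * Qᵀ = 1) (hV : Vᵀ * V = 1) :
    (∀ j, ∑ l, (Q * V) l j ^ 2 ≤ 1) ∧ ∑ j, ∑ l, (Q * V) l j ^ 2 ≤ r := by
  have hVt : Vᵀ * Vᵀᵀ = 1 := by rwa [transpose_transpose]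
  constructor
  · intro j
    have hcol : ∑ b, V b j ^ 2 = 1 := by
      simpa [mul_apply, sq] using congrFun (congrFun hV j) j
    exact hcol ▸ sum_sq_mulVec_le hQ fun b => V b j
  · calc ∑ j, ∑ l, (Q * V) l j ^ 2 = ∑ l, ∑ j, (Vᵀ *ᵥ Q l) j ^ 2 := by
          rw [Finset.sum_comm]; simp [mul_apply, mulVec, dotProduct, mul_comm]
      _ ≤ ∑ l, ∑ b, Q l b ^ 2 := Finset.sum_le_sum fun l _ => sum_sq_mulVec_le hVt (Q l)
      _ = r := by
          have hrow : ∀ l, ∑ b, Q l b ^ 2 = 1 := fun l => by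
            simpa [mul_apply, sq] using congrFun (congrFun hQ l) l
          simp [hrow]

theorem frobSq_sub_truncation_le [DecidableEq κ] {p : ℕ} {σ : Fin p → ℝ} (hσ : Antitone σ)
    (hσ0 : ∀ j, 0 ≤ σ j) {U : Matrix ι (Fin p) ℝ} {V : Matrix κ (Fin p) ℝ}
    (hU : Uᵀ * U = 1) (hV : Vᵀ * V = 1) (k : ℕ) {Y : Matrix ι κ ℝ} (hY : Y.rank ≤ k) :
    frobSq (U * diagonal σ * Vᵀ
        - U * diagonal (fun j : Fin p => if (j : ℕ) < k then σ j else 0) * Vᵀ)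
      ≤ frobSq (U * diagonal σ * Vᵀ - Y) := by
  obtain ⟨r, Q, rfl, hQ, hYQ⟩ := exists_mul_transpose_eq_one_and_mul_eq Y
  obtain ⟨ht1, ht⟩ := sum_sq_mul_apply_le hQ hV
  set X := U * diagonal σ * Vᵀ
  set t : Fin p → ℝ := fun j => ∑ l, (Q * V) l j ^ 2
  have h_trunc :
      frobSq (X - U * diagonal (fun j : Fin p => if (j : ℕ) < k then σ j else 0) * Vᵀ)
      = ∑ j : Fin p, if k ≤ (j : ℕ) then σ j ^ 2 else 0 := by
    rw [← Matrix.sub_mul, ← Matrix.mul_sub, diagonal_sub, frobSq_mul_transpose hV,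
      frobSq_mul_left hU, frobSq_diagonal]
    refine Finset.sum_congr rfl fun j _ => ?_
    split_ifs <;> first | omega | simp
  have h_X : frobSq X = ∑ j, σ j ^ 2 := by
    rw [frobSq_mul_transpose hV, frobSq_mul_left hU, frobSq_diagonal]
  have h_XQ : frobSq (X * Qᵀ) = ∑ j, σ j ^ 2 * t j := by
    rw [show X * Qᵀ = U * (diagonal σ * (Q * V)ᵀ) by simp [X, transpose_mul, Matrix.mul_assoc],
      frobSq_mul_left hU]
    simp only [frobSq, diagonal_mul, transpose_apply, mul_pow, Finset.mul_sum, t]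
  have h_proj : frobSq X - frobSq (X * Qᵀ) ≤ frobSq (X - Y) := by
    have hXY : X - Y - (X - Y) * Qᵀ * Q = X - X * Qᵀ * Q := by
      rw [Matrix.sub_mul, Matrix.sub_mul, hYQ]; abel
    have := frobSq_eq_add_of_mul_transpose_eq_one hQ (X - Y)
    rw [hXY] at this
    linarith [frobSq_eq_add_of_mul_transpose_eq_one hQ X, frobSq_nonneg ((X - Y) * Qᵀ)]
  calc _ = ∑ j : Fin p, if k ≤ (j : ℕ) then σ j ^ 2 else 0 := h_trunc
    _ ≤ ∑ j, σ j ^ 2 * (1 - t j) :=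
        sum_tail_le_sum_mul_one_sub (fun a b h => pow_le_pow_left₀ (hσ0 b) (hσ h) 2)
          (fun j => sq_nonneg _) (fun j => Finset.sum_nonneg fun l _ => sq_nonneg _) ht1
          (ht.trans (by exact_mod_cast hY))
    _ = frobSq X - frobSq (X * Qᵀ) := by
        rw [h_X, h_XQ, ← Finset.sum_sub_distrib]; simp [mul_sub]
    _ ≤ _ := h_proj

end EckartYoung

lemma transpose_mul_submatrix_eq_one {ι κ ν : Type*} [Fintype ι] [DecidableEq κ] [DecidableEq ν]
    {U : Matrix ι κ ℝ} (hU : Uᵀ * U = 1) {e : ν → κ} (he : Function.Injective e) :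
    (U.submatrix id e)ᵀ * U.submatrix id e = 1 := by
  rw [transpose_submatrix, ← submatrix_mul _ _ _ _ _ Function.bijective_id, hU,
    submatrix_one _ he]

section RectangularDiagonal

variable {ι κ : Type*} {n₁ n₂ : ℕ}

lemma dIdx₁_injective : Function.Injective (dIdx₁ (n₁ := n₁) (n₂ := n₂)) :=
  fun _ _ e => Fin.ext (congrArg Fin.val e :)

lemma dIdx₂_injective : Function.Injective (dIdx₂ (n₁ := n₁) (n₂ := n₂)) :=
  fun _ _ e => Fin.ext (congrArg Fin.val e :)

lemma sum_sum_eq_sum_diag (F : Fin n₁ → Fin n₂ → ℝ)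
    (hF : ∀ (a : Fin n₁) (b : Fin n₂), (a : ℕ) ≠ b → F a b = 0) :
    ∑ a, ∑ b, F a b = ∑ j : Fin (min n₁ n₂), F (dIdx₁ j) (dIdx₂ j) := by
  rw [← Finset.sum_product']
  refine (Fintype.sum_of_injective (fun j => (dIdx₁ j, dIdx₂ j)) ?_ _ _ ?_ fun _ => rfl).symm
  · exact fun _ _ h => dIdx₁_injective (congrArg Prod.fst h)
  · rintro ⟨a, b⟩ hab
    by_cases h : (a : ℕ) = b
    · exact absurd ⟨⟨a, lt_min a.2 (h ▸ b.2)⟩, Prod.ext rfl (Fin.ext h)⟩ hab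
    · exact hF a b h

lemma mul_mul_transpose_eq_of_diag (U : Matrix ι (Fin n₁) ℝ) {S : Matrix (Fin n₁) (Fin n₂) ℝ}
    (V : Matrix κ (Fin n₂) ℝ) (hS : ∀ (a : Fin n₁) (b : Fin n₂), (a : ℕ) ≠ b → S a b = 0) :
    U * S * Vᵀ = U.submatrix id (dIdx₁ (n₂ := n₂)) * diagonal (fun j => S (dIdx₁ j) (dIdx₂ j))
      * (V.submatrix id (dIdx₂ (n₁ := n₁)))ᵀ := by
  ext r c
  conv_rhs => rw [mul_apply]
  simp only [mul_diagonal]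
  simp only [mul_apply, submatrix_apply, transpose_apply, id, Finset.sum_mul]
  rw [Finset.sum_comm]
  exact sum_sum_eq_sum_diag _ fun a b h => by simp [hS a b h]

def leadingProj (n k : ℕ) : Matrix (Fin n) (Fin n) ℝ :=
  diagonal fun a => if (a : ℕ) < k then 1 else 0

lemma submatrix_castLE_mul_submatrix {n k : ℕ} (h : k ≤ n) (A : Matrix ι (Fin n) ℝ)
    (B : Matrix (Fin n) κ ℝ) :
    A.submatrix id (Fin.castLE h) * B.submatrix (Fin.castLE h) id = A * leadingProj n k * B := by
  ext r c
  conv_rhs => rw [mul_apply]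
  simp only [leadingProj, mul_diagonal]
  simp only [mul_apply, submatrix_apply, id]
  refine Fintype.sum_of_injective (Fin.castLE h) (Fin.castLE_injective h) _ _ ?_ fun a => ?_
  · intro a ha
    have : ¬ (a : ℕ) < k := fun hlt => ha ⟨⟨a, hlt⟩, rfl⟩
    simp [this]
  · simp [a.2]

lemma submatrix_castLE_mul_mul_transpose {k : ℕ} (h₁ : k ≤ n₁) (h₂ : k ≤ n₂)
    (U : Matrix ι (Fin n₁) ℝ) (S : Matrix (Fin n₁) (Fin n₂) ℝ) (V : Matrix κ (Fin n₂) ℝ) :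
    U.submatrix id (Fin.castLE h₁) * S.submatrix (Fin.castLE h₁) (Fin.castLE h₂)
        * (V.submatrix id (Fin.castLE h₂))ᵀ
      = U * (leadingProj n₁ k * S * leadingProj n₂ k) * Vᵀ := by
  rw [transpose_submatrix,
    show S.submatrix (Fin.castLE h₁) (Fin.castLE h₂)
      = (S.submatrix id (Fin.castLE h₂)).submatrix (Fin.castLE h₁) id from rfl,
    submatrix_castLE_mul_submatrix,
    show U * leadingProj n₁ k * S.submatrix id (Fin.castLE h₂)
      = (U * leadingProj n₁ k * S).submatrix id (Fin.castLE h₂) from rfl,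
    submatrix_castLE_mul_submatrix]
  simp only [Matrix.mul_assoc]

end RectangularDiagonal

section Transform

variable (M : ∀ k, Matrix (Fin (m k)) (Fin (m k)) ℝ) {a b : Type}

def kronProd : Matrix (TI m) (TI m) ℝ := of fun i j => ∏ k, M k (i k) (j k)

lemma kronProd_mul (P Q : ∀ k, Matrix (Fin (m k)) (Fin (m k)) ℝ) :
    kronProd (fun k => P k * Q k) = kronProd P * kronProd Q := by
  classical
  ext i j
  simp only [kronProd, of_apply, mul_apply, Fintype.prod_sum, Finset.prod_mul_distrib]

lemma kronProd_one : kronProd (fun k => (1 : Matrix (Fin (m k)) (Fin (m k)) ℝ)) = 1 := by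
  classical
  ext i j
  simp [kronProd, one_apply, Finset.prod_boole, funext_iff]

lemma kronProd_transpose : kronProd (fun k => (M k)ᵀ) = (kronProd M)ᵀ := rfl

lemma kronProd_smul (c : Fin q → ℝ) :
    kronProd (fun k => c k • M k) = (∏ k, c k) • kronProd M := by
  ext i j
  simp [kronProd, Finset.prod_mul_distrib]

lemma hat_apply (A : TI m → Matrix a b ℝ) (i : TI m) (r : a) (c : b) :
    hat M A i r c = (kronProd M *ᵥ fun j => A j r c) i := by
  simp [hat, kronProd, mulVec, dotProduct, Matrix.sum_apply]

lemma hat_hat (P Q : ∀ k, Matrix (Fin (m k)) (Fin (m k)) ℝ) (A : TI m → Matrix a b ℝ) :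
    hat P (hat Q A) = hat (fun k => P k * Q k) A := by
  ext i r c
  simp only [hat_apply, kronProd_mul, ← mulVec_mulVec]

lemma hat_one (A : TI m → Matrix a b ℝ) :
    hat (fun k => (1 : Matrix (Fin (m k)) (Fin (m k)) ℝ)) A = A := by
  ext i r c
  simp [hat_apply, kronProd_one]

variable {M}

lemma hat_unhat (hM : ∀ k, M k * (M k)⁻¹ = 1) (A : TI m → Matrix a b ℝ) :
    hat M (unhat M A) = A := by
  rw [show unhat M A = hat (fun k => (M k)⁻¹) A from rfl, hat_hat]
  simp only [hM]
  exact hat_one A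

lemma hat_starM (hM : ∀ k, M k * (M k)⁻¹ = 1) {c : Type} [Fintype b]
    (A : TI m → Matrix a b ℝ) (B : TI m → Matrix b c ℝ) (i : TI m) :
    hat M (starM M A B) i = hat M A i * hat M B i := by
  rw [starM, hat_unhat hM]

lemma hat_transM (hM : ∀ k, M k * (M k)⁻¹ = 1) (A : TI m → Matrix a b ℝ) (i : TI m) :
    hat M (transM M A) i = (hat M A i)ᵀ := by
  rw [transM, hat_unhat hM]

lemma hat_idM (hM : ∀ k, M k * (M k)⁻¹ = 1) [DecidableEq a] (i : TI m) :
    hat M (idM M a) i = 1 := by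
  rw [idM, hat_unhat hM]

lemma hat_sub (A B : TI m → Matrix a b ℝ) : hat M (A - B) = hat M A - hat M B := by
  funext i
  simp [hat, smul_sub, Finset.sum_sub_distrib]

lemma hat_submatrix {a' b' : Type} (A : TI m → Matrix a b ℝ) (f : a' → a) (g : b' → b)
    (i : TI m) : hat M (fun j => (A j).submatrix f g) i = (hat M A i).submatrix f g := by
  ext r c
  simp [hat_apply]

lemma sum_frobSq_hat [Fintype a] [Fintype b] {c : Fin q → ℝ}
    (hM : ∀ k, (M k)ᵀ * M k = c k ^ 2 • 1) (A : TI m → Matrix a b ℝ) :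
    ∑ i, frobSq (hat M A i) = (∏ k, c k ^ 2) * ∑ i, frobSq (A i) := by
  have hK : (kronProd M)ᵀ * kronProd M = (∏ k, c k ^ 2) • 1 := by
    rw [← kronProd_transpose, ← kronProd_mul]
    simp only [hM, kronProd_smul, kronProd_one]
  have hentry : ∀ r s, ∑ i, hat M A i r s ^ 2 = (∏ k, c k ^ 2) * ∑ i, A i r s ^ 2 :=
    fun r s => by simp only [hat_apply, sum_sq_mulVec_of_transpose_mul hK]
  have hswap : ∀ X : TI m → Matrix a b ℝ,
      ∑ i, frobSq (X i) = ∑ r, ∑ s, ∑ i, X i r s ^ 2 := fun X => by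
    simp only [frobSq]; rw [Finset.sum_comm]; simp only [Finset.sum_comm (γ := TI m)]
  rw [hswap, hswap]
  simp only [hentry, Finset.mul_sum]

end Transform

section SVDM

variable {M : ∀ k, Matrix (Fin (m k)) (Fin (m k)) ℝ}

lemma IsStarMOrthogonal.transpose_mul_hat {a : Type} [Fintype a] [DecidableEq a]
    {Q : TI m → Matrix a a ℝ} (hQ : IsStarMOrthogonal M Q) (hM : ∀ k, M k * (M k)⁻¹ = 1)
    (i : TI m) : (hat M Q i)ᵀ * hat M Q i = 1 := by
  have := congrFun (congrArg (hat M) hQ.1) i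
  rwa [hat_starM hM, hat_transM hM, hat_idM hM] at this

variable {n₁ n₂ : ℕ} {A : TI m → Matrix (Fin n₁) (Fin n₂) ℝ}
  {U : TI m → Matrix (Fin n₁) (Fin n₁) ℝ} {S : TI m → Matrix (Fin n₁) (Fin n₂) ℝ}
  {V : TI m → Matrix (Fin n₂) (Fin n₂) ℝ}

lemma IsTSVDM.hat_eq (h : IsTSVDM M A U S V) (hM : ∀ k, M k * (M k)⁻¹ = 1) (i : TI m) :
    hat M A i = hat M U i * hat M S i * (hat M V i)ᵀ := by
  rw [h.decomp, hat_starM hM, hat_starM hM, hat_transM hM]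

lemma hat_truncApprox (hM : ∀ k, M k * (M k)⁻¹ = 1) (k : ℕ) (hk : k ≤ min n₁ n₂) (i : TI m) :
    hat M (truncApprox M U S V k hk) i
      = hat M U i * (leadingProj n₁ k * hat M S i * leadingProj n₂ k) * (hat M V i)ᵀ := by
  have h₁ := hk.trans (min_le_left n₁ n₂)
  have h₂ := hk.trans (min_le_right n₁ n₂)
  have hU : hat M (truncCols h₁ U) i = (hat M U i).submatrix id (Fin.castLE h₁) :=
    hat_submatrix U id _ i
  have hV : hat M (truncCols h₂ V) i = (hat M V i).submatrix id (Fin.castLE h₂) :=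
    hat_submatrix V id _ i
  have hS : hat M (truncBlock h₁ h₂ S) i
      = (hat M S i).submatrix (Fin.castLE h₁) (Fin.castLE h₂) :=
    hat_submatrix S _ _ i
  rw [truncApprox, hat_starM hM, hat_starM hM, hat_transM hM, hU, hV, hS]
  exact submatrix_castLE_mul_mul_transpose h₁ h₂ _ _ _

lemma IsTSVDM.frobSq_hat_sub_truncApprox_le (h : IsTSVDM M A U S V)
    (hM : ∀ k, M k * (M k)⁻¹ = 1) (k : ℕ) (hk : k ≤ min n₁ n₂)
    {Y : Matrix (Fin n₁) (Fin n₂) ℝ} (hY : Y.rank ≤ k) (i : TI m) :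
    frobSq (hat M (A - truncApprox M U S V k hk) i) ≤ frobSq (hat M A i - Y) := by
  have hdiag := h.fdiag i
  have htrunc_diag : ∀ (a : Fin n₁) (b : Fin n₂), (a : ℕ) ≠ b →
      (leadingProj n₁ k * hat M S i * leadingProj n₂ k) a b = 0 := fun a b hab => by
    simp [leadingProj, diagonal_mul, mul_diagonal, hdiag a b hab]
  have hσ : (fun j => (leadingProj n₁ k * hat M S i * leadingProj n₂ k) (dIdx₁ j) (dIdx₂ j))
      = fun j : Fin (min n₁ n₂) => if (j : ℕ) < k then hat M S i (dIdx₁ j) (dIdx₂ j) else 0 := by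
    ext j
    by_cases hj : (j : ℕ) < k <;> simp [leadingProj, dIdx₁, dIdx₂, hj]
  rw [hat_sub, Pi.sub_apply, h.hat_eq hM, hat_truncApprox hM,
    mul_mul_transpose_eq_of_diag _ _ hdiag, mul_mul_transpose_eq_of_diag _ _ htrunc_diag, hσ]
  exact frobSq_sub_truncation_le (fun j j' hjj => h.descend i j j' hjj) (h.nonneg i)
    (transpose_mul_submatrix_eq_one (h.orthU.transpose_mul_hat hM i) dIdx₁_injective)
    (transpose_mul_submatrix_eq_one (h.orthV.transpose_mul_hat hM i) dIdx₂_injective) k hY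

end SVDM

section Unfolding

variable {n₁ n₂ : ℕ}

def fold (X : Matrix (Fin n₁ × TI m) (Fin n₂) ℝ) : TI m → Matrix (Fin n₁) (Fin n₂) ℝ :=
  fun i => of fun r j => X (r, i) j

lemma frobSq_eq_sum_frobSq_fold (X : Matrix (Fin n₁ × TI m) (Fin n₂) ℝ) :
    frobSq X = ∑ i, frobSq (fold X i) := by
  simp only [frobSq, fold, of_apply, Fintype.sum_prod_type]
  exact Finset.sum_comm

lemma fold_sub (X Y : Matrix (Fin n₁ × TI m) (Fin n₂) ℝ) : fold (X - Y) = fold X - fold Y := rfl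

lemma rank_hat_fold_le (M : ∀ k, Matrix (Fin (m k)) (Fin (m k)) ℝ)
    (X : Matrix (Fin n₁ × TI m) (Fin n₂) ℝ) (i : TI m) : (hat M (fold X) i).rank ≤ X.rank := by
  have : hat M (fold X) i
      = (of fun r (p : Fin n₁ × TI m) => if p.1 = r then kronProd M i p.2 else 0) * X := by
    ext r c
    simp [hat_apply, mul_apply, mulVec, dotProduct, Fintype.sum_prod_type, fold]
  rw [this]
  exact rank_mul_le_right _ _

end Unfolding

theorem truncApprox_beats_matrix_svd_general {q : ℕ} {m : Fin q → ℕ}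
    (M : ∀ k, Matrix (Fin (m k)) (Fin (m k)) ℝ)
    (c : Fin q → ℝ) (W : ∀ k, Matrix (Fin (m k)) (Fin (m k)) ℝ)
    (hc : ∀ k, c k ≠ 0)
    (hW : ∀ k, W k * (W k)ᵀ = 1 ∧ (W k)ᵀ * W k = 1)
    (hM : ∀ k, M k = c k • W k)
    {n₁ n₂ : ℕ} (A : TI m → Matrix (Fin n₁) (Fin n₂) ℝ)
    (U : TI m → Matrix (Fin n₁) (Fin n₁) ℝ)
    (S : TI m → Matrix (Fin n₁) (Fin n₂) ℝ)
    (V : TI m → Matrix (Fin n₂) (Fin n₂) ℝ)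
    (hSVD : IsTSVDM M A U S V) (k : ℕ) (hk : k ≤ min n₁ n₂)
    (Amat : Matrix (Fin n₁ × TI m) (Fin n₂) ℝ)
    (hAmat : Amat = Matrix.of fun ri j => A ri.2 ri.1 j)
    (B : Matrix (Fin n₁ × TI m) (Fin n₂) ℝ) (hBrank : B.rank ≤ k) :
    frob (A - truncApprox M U S V k hk) ≤ mFrob (Amat - B) := by
  have hMtM : ∀ k, (M k)ᵀ * M k = c k ^ 2 • 1 := fun k => by
    rw [hM k, transpose_smul, smul_mul_smul_comm, (hW k).2, sq]
  have hMinv : ∀ k, M k * (M k)⁻¹ = 1 := fun k => by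
    refine mul_nonsing_inv _ (isUnit_det_of_left_inverse (B := (c k ^ 2)⁻¹ • (M k)ᵀ) ?_)
    rw [smul_mul_assoc, hMtM, smul_smul, inv_mul_cancel₀ (pow_ne_zero 2 (hc k)), one_smul]
  have hA : A = fold Amat := by rw [hAmat]; rfl
  have hslices : ∑ i, frobSq (hat M (A - truncApprox M U S V k hk) i)
      ≤ ∑ i, frobSq (hat M (A - fold B) i) := Finset.sum_le_sum fun i _ => by
    rw [hat_sub A (fold B)]
    exact hSVD.frobSq_hat_sub_truncApprox_le hMinv k hk
      ((rank_hat_fold_le M B i).trans hBrank) i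
  rw [sum_frobSq_hat hMtM, sum_frobSq_hat hMtM] at hslices
  have hw : 0 < ∏ k, c k ^ 2 := Finset.prod_pos fun k _ => by have := hc k; positivity
  show √(∑ i, frobSq ((A - truncApprox M U S V k hk) i)) ≤ √(frobSq (Amat - B))
  rw [frobSq_eq_sum_frobSq_fold, fold_sub, ← hA]
  exact Real.sqrt_le_sqrt (le_of_mul_le_mul_left hslices hw)

/-- (Optimality of the t-rank-`k` tensor representation over the
rank-`k` matrix representation.) If `A_mat` is the matrix whose `j`-th column is the
vectorization of the `j`-th lateral slice of `A` and `B` is a best rank-`k`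
approximation of `A_mat` in the Frobenius norm, then `‖A − A_k‖_F ≤ ‖A_mat − B‖_F`. -/
theorem truncApprox_beats_matrix_svd {q : ℕ} {m : Fin q → ℕ}
    (M : ∀ k, Matrix (Fin (m k)) (Fin (m k)) ℝ)
    (c : Fin q → ℝ) (W : ∀ k, Matrix (Fin (m k)) (Fin (m k)) ℝ)
    (hc : ∀ k, c k ≠ 0)
    (hW : ∀ k, W k * (W k)ᵀ = 1 ∧ (W k)ᵀ * W k = 1)
    (hM : ∀ k, M k = c k • W k)
    {n₁ n₂ : ℕ} (A : TI m → Matrix (Fin n₁) (Fin n₂) ℝ)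
    (U : TI m → Matrix (Fin n₁) (Fin n₁) ℝ)
    (S : TI m → Matrix (Fin n₁) (Fin n₂) ℝ)
    (V : TI m → Matrix (Fin n₂) (Fin n₂) ℝ)
    (hSVD : IsTSVDM M A U S V) (k : ℕ) (hk : k ≤ min n₁ n₂)
    (Amat : Matrix (Fin n₁ × TI m) (Fin n₂) ℝ)
    (hAmat : Amat = Matrix.of fun ri j => A ri.2 ri.1 j)
    (B : Matrix (Fin n₁ × TI m) (Fin n₂) ℝ) (hBrank : B.rank ≤ k)
    (hBopt : ∀ C : Matrix (Fin n₁ × TI m) (Fin n₂) ℝ, C.rank ≤ k →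
      mFrob (Amat - B) ≤ mFrob (Amat - C)) :
    frob (A - truncApprox M U S V k hk) ≤ mFrob (Amat - B) :=
  truncApprox_beats_matrix_svd_general M c W hc hW hM A U S V hSVD k hk Amat hAmat B hBrank

end TSVDM
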